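/- Let n ≥ 2 and fix i ≠ j with 1 ≤ i, j ≤ n. Let w be the permutation of {1,…,n} with w(i) = 1, w(j) = n, and whose values at the remaining positions, read in increasing order of position, are n−1, n−2, …, 2 in decreasing order. Let w₀ be the permutation with w₀(k) = n−k+1 for all k, and write s_k for the transposition exchanging k and k+1. Then, with products of permutations applied right to left (so that w·s means apply s first): w = w₀·s_1·s_2·⋯·s_{j−1}·s_{n−1}·s_{n−2}·⋯·s_i if j < i, and w = w₀·s_1·s_2·⋯·s_{j−2}·s_{n−1}·s_{n−2}·⋯·s_i if j > i (where an empty product of transpositions is the identity). -/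

import Mathlib

/-!
A permutation of a finite chain is determined by its values on a set `s` together with being
strictly decreasing off `s`: the image of `sᶜ` is then fixed, and so is the order in which it is
filled. The product `w₀·s_1⋯s_a·s_{n−1}⋯s_i` is explicit: `s_{n−1}⋯s_i` sends position `i` to `n`
and shifts the later positions down by one, `s_1⋯s_a` sends `a+1` to `1` and shifts the earlier
positions up by one, and each is increasing on the remaining positions. Taking for `a+1` the
image of `j` under the first factor (`j` if `j < i`, `j − 1` if `j > i`), the product sends
`i ↦ 1`, `j ↦ n`, and is decreasing on the other positions, so it is `w`.
-/

open Matrix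

noncomputable section

/-- The length of a permutation: its number of inversions. -/
def invLen {n : ℕ} (w : Equiv.Perm (Fin n)) : ℕ :=
  (Finset.univ.filter (fun p : Fin n × Fin n => p.1 < p.2 ∧ w p.2 < w p.1)).card

def IsTransposition {n : ℕ} (t : Equiv.Perm (Fin n)) : Prop :=
  ∃ a b : Fin n, a ≠ b ∧ t = Equiv.swap a b

/-- `BruhatCovers w v` means `w` covers `v` in the Bruhat order:
`v = w·t` for some transposition `t` and `ℓ(v) = ℓ(w) − 1`. -/
def BruhatCovers {n : ℕ} (w v : Equiv.Perm (Fin n)) : Prop :=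
  (∃ t, IsTransposition t ∧ v = w * t) ∧ invLen v + 1 = invLen w

/-- The Bruhat order: reflexive–transitive closure of the covering relation. -/
def BruhatLE {n : ℕ} (v w : Equiv.Perm (Fin n)) : Prop :=
  Relation.ReflTransGen (fun x y => BruhatCovers y x) v w

def BruhatLT {n : ℕ} (v w : Equiv.Perm (Fin n)) : Prop :=
  BruhatLE v w ∧ v ≠ w

/-- The matrix unit `E_{kl}`. -/
def stdE (n : ℕ) (k l : Fin n) : Matrix (Fin n) (Fin n) ℂ := Matrix.single k l 1

/-- The permutation matrix of `σ`: entry `(k,l)` is `1` iff `k = σ(l)`. -/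
def permMat {n : ℕ} (σ : Equiv.Perm (Fin n)) : Matrix (Fin n) (Fin n) ℂ :=
  Matrix.of fun k l => if k = σ l then 1 else 0

/-- The Hessenberg space of a (1-based) Hessenberg function `h`:
matrices `M` with `M_{kl} = 0` whenever `k > h(l)`.  Row index `k : Fin n`
corresponds to the 1-based row `(k : ℕ) + 1`. -/
def HessSpace {n : ℕ} (h : Fin n → ℕ) : Set (Matrix (Fin n) (Fin n) ℂ) :=
  {M | ∀ k l : Fin n, h l < (k : ℕ) + 1 → M k l = 0}

/-- The span `H_{ij}` of the matrix units `E_{kl}` with `k ≤ i` and `l ≥ j`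
(`i`, `j`, `k`, `l` all 1-based): matrices vanishing outside the
upper-right `i × (n−j+1)` rectangle. -/
def Hrect (n i j : ℕ) : Set (Matrix (Fin n) (Fin n) ℂ) :=
  {M | ∀ k l : Fin n, ¬((k : ℕ) + 1 ≤ i ∧ j ≤ (l : ℕ) + 1) → M k l = 0}

/-- The adjacent transposition `s_k` (1-based: exchanging `k` and `k+1`),
as a permutation of `Fin n` (0-based: exchanging `k−1` and `k`). -/
def adjT (n : ℕ) (k : ℕ) : Equiv.Perm (Fin n) :=
  if h : 1 ≤ k ∧ k < n then Equiv.swap ⟨k - 1, by omega⟩ ⟨k, h.2⟩ else 1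

/-- The product `s_1·s_2·⋯·s_m`. -/
def ascProd (n m : ℕ) : Equiv.Perm (Fin n) :=
  ((List.range m).map fun t => adjT n (t + 1)).prod

/-- The product `s_{n−1}·s_{n−2}·⋯·s_i`. -/
def descProd (n i : ℕ) : Equiv.Perm (Fin n) :=
  ((List.range (n - i)).map fun t => adjT n (n - 1 - t)).prod

theorem Equiv.Perm.eq_of_eqOn_of_strictAntiOn_compl {α : Type*} [LinearOrder α] [Finite α]
    {v w : Equiv.Perm α} {s : Set α} (hs : Set.EqOn v w s)
    (hv : StrictAntiOn v sᶜ) (hw : StrictAntiOn w sᶜ) : v = w := by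
  have hrange : Set.range (fun x : ↥sᶜ => v x) = Set.range (fun x : ↥sᶜ => w x) := by
    simp only [← Set.image_eq_range]
    rw [Set.image_compl_eq v.bijective, Set.image_compl_eq w.bijective, Set.image_congr hs]
  have hcompl := (StrictAnti.range_inj (Set.strictAntiOn_iff_strictAnti.mp hv)
    (Set.strictAntiOn_iff_strictAnti.mp hw)).mp hrange
  ext x
  by_cases hx : x ∈ s
  · exact hs hx
  · exact congrFun hcompl ⟨x, hx⟩

lemma adjT_apply_val {n k : ℕ} (h1 : 1 ≤ k) (h2 : k < n) (x : Fin n) :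
    (adjT n k x : ℕ) = if (x : ℕ) = k - 1 then k else if (x : ℕ) = k then k - 1 else x := by
  rw [adjT, dif_pos ⟨h1, h2⟩, Equiv.swap_apply_def]
  split_ifs <;> simp only [Fin.ext_iff] at * <;> omega

lemma ascProd_succ (n m : ℕ) : ascProd n (m + 1) = ascProd n m * adjT n (m + 1) := by
  rw [ascProd, List.range_succ, List.map_append, List.prod_append, List.map_singleton,
    List.prod_singleton, ascProd]

lemma ascProd_apply_val {n m : ℕ} (hm : m < n) (x : Fin n) :
    (ascProd n m x : ℕ) =
      if (x : ℕ) < m then (x : ℕ) + 1 else if (x : ℕ) = m then 0 else (x : ℕ) := by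
  induction m generalizing x with
  | zero => simp [ascProd]
  | succ m ih =>
    rw [ascProd_succ, Equiv.Perm.mul_apply, ih (by omega), adjT_apply_val (by omega) hm]
    split_ifs <;> omega

lemma descProd_eq_mul_adjT {n i : ℕ} (hi : i < n) :
    descProd n i = descProd n (i + 1) * adjT n i := by
  rw [descProd, show n - i = n - (i + 1) + 1 by omega, List.range_succ, List.map_append,
    List.prod_append, descProd, List.map_singleton, List.prod_singleton,
    show n - 1 - (n - (i + 1)) = i by omega]

lemma descProd_apply_val {n i : ℕ} (hi1 : 1 ≤ i) (hin : i ≤ n) (x : Fin n) :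
    (descProd n i x : ℕ) =
      if (x : ℕ) = i - 1 then n - 1 else if i ≤ (x : ℕ) then x - 1 else x := by
  obtain ⟨k, rfl⟩ : ∃ k, i = n - k := ⟨n - i, by omega⟩
  induction k generalizing x with
  | zero =>
    simp only [descProd, tsub_zero, tsub_self, List.range_zero, List.map_nil, List.prod_nil,
      Equiv.Perm.coe_one, id_eq]
    split_ifs <;> omega
  | succ k ih =>
    rw [descProd_eq_mul_adjT (by omega), Equiv.Perm.mul_apply,
      show n - (k + 1) + 1 = n - k by omega, ih _ (by omega) (by omega),
      adjT_apply_val hi1 (by omega)]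
    have := x.isLt
    split_ifs <;> omega

lemma ascProd_strictMonoOn {n m : ℕ} (hm : m < n) :
    StrictMonoOn (ascProd n m) {x | (x : ℕ) ≠ m} := by
  intro x (hx : (x : ℕ) ≠ m) y (hy : (y : ℕ) ≠ m) hxy
  rw [Fin.lt_def, ascProd_apply_val hm, ascProd_apply_val hm] at *
  split_ifs <;> omega

lemma descProd_strictMonoOn {n i : ℕ} (hi1 : 1 ≤ i) (hin : i ≤ n) :
    StrictMonoOn (descProd n i) {x | (x : ℕ) ≠ i - 1} := by
  intro x (hx : (x : ℕ) ≠ i - 1) y (hy : (y : ℕ) ≠ i - 1) hxy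
  rw [Fin.lt_def, descProd_apply_val hi1 hin, descProd_apply_val hi1 hin] at *
  split_ifs <;> omega

theorem eq_mul_ascProd_mul_descProd_of_strictAntiOn {n i : ℕ} (hi1 : 1 ≤ i) (hin : i ≤ n)
    {J : Fin n} (hJ : (J : ℕ) ≠ i - 1) {w w0 : Equiv.Perm (Fin n)}
    (hwI : (w ⟨i - 1, by omega⟩ : ℕ) = 0) (hwJ : (w J : ℕ) = n - 1)
    (hw : StrictAntiOn w {⟨i - 1, by omega⟩, J}ᶜ)
    (hw0 : ∀ k : Fin n, (w0 k : ℕ) = n - 1 - k) :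
    w = w0 * ascProd n (descProd n i J) * descProd n i := by
  set I : Fin n := ⟨i - 1, by omega⟩
  set d := descProd n i
  set a : ℕ := (d J : ℕ)
  have hdI : (d I : ℕ) = n - 1 := by simp [d, I, descProd_apply_val hi1 hin]
  have ha : a < n - 1 := by
    have : d J ≠ d I := d.injective.ne (fun h => hJ (congrArg Fin.val h))
    have := (d J).isLt
    omega
  have hw0_strictAnti : StrictAnti w0 := fun x y hxy => by
    rw [Fin.lt_def, hw0, hw0]; omega
  symm
  apply Equiv.Perm.eq_of_eqOn_of_strictAntiOn_compl _ _ hw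
  · rintro x (rfl | rfl) <;> apply Fin.ext
    · rw [hwI, Equiv.Perm.mul_apply, Equiv.Perm.mul_apply, hw0, ascProd_apply_val (by omega), hdI]
      split_ifs <;> omega
    · rw [hwJ, Equiv.Perm.mul_apply, Equiv.Perm.mul_apply, hw0, ascProd_apply_val (by omega)]
      simp [a]
  · intro p hp q hq hpq
    simp only [Set.mem_compl_iff, Set.mem_insert_iff, Set.mem_singleton_iff, not_or] at hp hq
    have hd : d p < d q := descProd_strictMonoOn hi1 hin (fun h => hp.1 (Fin.ext h))
      (fun h => hq.1 (Fin.ext h)) hpq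
    have hasc : ascProd n a (d p) < ascProd n a (d q) :=
      ascProd_strictMonoOn (by omega) (fun h => hp.2 (d.injective (Fin.ext h)))
        (fun h => hq.2 (d.injective (Fin.ext h))) hd
    exact hw0_strictAnti hasc

/-- with `w` the permutation with `w(i)=1`, `w(j)=n` and remaining
values `n−1,…,2` in decreasing order, and `w₀` the longest permutation
(`w₀(k) = n−k+1`, 0-based: `(w₀ k : ℕ) = n − 1 − k`):
`w = w₀·s_1⋯s_{j−1}·s_{n−1}⋯s_i` if `j < i`, and
`w = w₀·s_1⋯s_{j−2}·s_{n−1}⋯s_i` if `j > i`. -/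
theorem stmt8 (n : ℕ) (i j : ℕ) (hi1 : 1 ≤ i) (hin : i ≤ n)
    (hj1 : 1 ≤ j) (hjn : j ≤ n) (w : Equiv.Perm (Fin n))
    (hwi : w ⟨i - 1, by omega⟩ = ⟨0, by omega⟩)
    (hwj : w ⟨j - 1, by omega⟩ = ⟨n - 1, by omega⟩)
    (hdec : ∀ p q : Fin n, p ≠ ⟨i - 1, by omega⟩ → p ≠ ⟨j - 1, by omega⟩ →
      q ≠ ⟨i - 1, by omega⟩ → q ≠ ⟨j - 1, by omega⟩ → p < q → w q < w p)
    (w0 : Equiv.Perm (Fin n)) (hw0 : ∀ k : Fin n, ((w0 k : Fin n) : ℕ) = n - 1 - (k : ℕ)) :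
    (j < i → w = w0 * ascProd n (j - 1) * descProd n i) ∧
    (i < j → w = w0 * ascProd n (j - 2) * descProd n i) := by
  have hw : StrictAntiOn w {⟨i - 1, by omega⟩, ⟨j - 1, by omega⟩}ᶜ := by
    intro p hp q hq hpq
    simp only [Set.mem_compl_iff, Set.mem_insert_iff, Set.mem_singleton_iff, not_or] at hp hq
    exact hdec p q hp.1 hp.2 hq.1 hq.2 hpq
  have hw_eq (hJ : j - 1 ≠ i - 1) := eq_mul_ascProd_mul_descProd_of_strictAntiOn hi1 hin hJ
    (congrArg Fin.val hwi) (congrArg Fin.val hwj) hw hw0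
  have hdJ := descProd_apply_val hi1 hin ⟨j - 1, by omega⟩
  dsimp only at hdJ
  refine ⟨fun hji => ?_, fun hij => ?_⟩
  · rw [hdJ, if_neg (by omega), if_neg (by omega)] at hw_eq
    exact hw_eq (by omega)
  · rw [hdJ, if_neg (by omega), if_pos (by omega), show j - 1 - 1 = j - 2 by omega] at hw_eq
    exact hw_eq (by omega)
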